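/- Schützenberger's theorem: Let A be a finite alphabet and L ⊆ A*. The following are equivalent: (1) L is star-free; (2) the syntactic monoid Synt(L) = A*/≡_L is finite and aperiodic; (3) L is recognized by a finite aperiodic monoid, i.e., there exist a finite aperiodic monoid M and a monoid homomorphism φ : A* → M with φ^{-1}(φ(L)) = L. -/

import Mathlib

/-- Concatenation of languages: `K · K' = {uv : u ∈ K, v ∈ K'}`. -/
def Lang.cat {α : Type*} (K K' : Set (FreeMonoid α)) : Set (FreeMonoid α) :=
  {w | ∃ u ∈ K, ∃ v ∈ K', w = u * v}

/-- The class `SF(A*)` of star-free languages over the alphabet `A`: the smallest class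
containing `A*` and `{a}` for each letter `a`, closed under union, set difference and
concatenation. -/
inductive SF {A : Type*} : Set (FreeMonoid A) → Prop
  | full : SF Set.univ
  | letter (a : A) : SF {FreeMonoid.of a}
  | union {K K'} : SF K → SF K' → SF (K ∪ K')
  | diff {K K'} : SF K → SF K' → SF (K \ K')
  | concat {K K'} : SF K → SF K' → SF (Lang.cat K K')

/-- The syntactic congruence of `L ⊆ A*`: `u ≡_L v` iff for all `p, q ∈ A*`,
`p u q ∈ L ↔ p v q ∈ L`.  The syntactic monoid `Synt(L)` is its quotient
`(syntacticCon L).Quotient`. -/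
def syntacticCon {A : Type*} (L : Set (FreeMonoid A)) : Con (FreeMonoid A) where
  r u v := ∀ p q : FreeMonoid A, p * u * q ∈ L ↔ p * v * q ∈ L
  iseqv := ⟨fun _ _ _ => Iff.rfl, fun h p q => (h p q).symm,
    fun h h' p q => (h p q).trans (h' p q)⟩
  mul' {w x y z} h h' := by
    intro p q
    have h1 := h' (p * w) q
    have h2 := h p (z * q)
    simp only [mul_assoc] at h1 h2 ⊢
    exact h1.trans h2

/-- A monoid `M` is aperiodic if for every `x ∈ M` there is an `n ∈ ℕ`
with `x ^ n = x ^ (n + 1)`. -/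
def Aperiodic (M : Type*) [Monoid M] : Prop :=
  ∀ x : M, ∃ n : ℕ, x ^ n = x ^ (n + 1)

/-!
Star-free languages are recognized by finite aperiodic monoids: `A*` and single letters are,
Boolean operations are handled by direct products, and the concatenation `K K'` of languages
recognized by `φ : A* → M` and `ψ : A* → N` is recognized by the Schützenberger product, which
records besides `φ w` and `ψ w` the set of pairs `(φ u, ψ v)` over the factorizations `w = u v`.
A language is recognized by a finite aperiodic monoid iff its syntactic monoid is finite and
aperiodic, since the syntactic monoid is a quotient of the image of every recognizing morphism
and recognizes the language itself.

Conversely, every fibre `φ⁻¹(m)` of a morphism `φ : A* → M` to a finite aperiodic monoid is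
star-free, by induction on `|M|` and on the number of letters not mapped to `1` (the local divisor
technique of Diekert and Kufleitner). Pick a letter `c` with `x = φ c ≠ 1`. A word either avoids
`c`, which the induction on letters handles, or factors as `u c z v` with `u, v` avoiding `c` and
`z` a product of blocks `w₁ c ⋯ wₖ c` with the `wᵢ` avoiding `c`. Reading each block as the letter
`φ wᵢ` turns `z` into a word over the alphabet `M`, whose image under `g ↦ x g x` in the local
divisor `M x ∩ x M` (with product `s x ∘ y = s y`) is `x φ(z)`. Since `x` is not a unit of the
aperiodic monoid `M`, `1 ∉ M x ∩ x M`, so the local divisor is smaller than `M`; and star-free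
languages over `M` pull back to star-free languages of block products.
-/

open FreeMonoid Function

universe u

section Aperiodic

variable {M N : Type*} [Monoid M] [Monoid N]

theorem pow_eq_of_pow_eq_pow_succ {x : M} {n i : ℕ} (h : x ^ n = x ^ (n + 1)) (hi : n ≤ i) :
    x ^ i = x ^ n := by
  induction i, hi using Nat.le_induction with
  | base => rfl
  | succ i _ ih => rw [pow_succ, ih, ← pow_succ, ← h]

theorem Aperiodic.exists_pow_eq_of_le (hM : Aperiodic M) (x : M) :
    ∃ n, ∀ i, n ≤ i → x ^ i = x ^ n :=
  (hM x).imp fun _ h _ => pow_eq_of_pow_eq_pow_succ h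

theorem Aperiodic.eq_one_of_isUnit (hM : Aperiodic M) {x : M} (hx : IsUnit x) : x = 1 := by
  obtain ⟨n, hn⟩ := hM x
  rw [pow_succ] at hn
  exact (hx.pow n).mul_left_cancel (hn.symm.trans (mul_one _).symm)

theorem Aperiodic.prod (hM : Aperiodic M) (hN : Aperiodic N) : Aperiodic (M × N) := by
  intro x
  obtain ⟨n₁, h₁⟩ := hM.exists_pow_eq_of_le x.1
  obtain ⟨n₂, h₂⟩ := hN.exists_pow_eq_of_le x.2
  refine ⟨max n₁ n₂, Prod.ext ?_ ?_⟩
  · simp only [Prod.pow_fst, h₁ _ (le_max_left _ _), h₁ (max n₁ n₂ + 1) (by omega)]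
  · simp only [Prod.pow_snd, h₂ _ (le_max_right _ _), h₂ (max n₁ n₂ + 1) (by omega)]

theorem Aperiodic.of_factorsThrough {P : Type*} [Monoid P] (hN : Aperiodic N) (f : M →* N)
    (g : M →* P) (hg : Surjective g) (hgf : FactorsThrough g f) : Aperiodic P := by
  intro y
  obtain ⟨x, rfl⟩ := hg y
  obtain ⟨n, hn⟩ := hN (f x)
  refine ⟨n, ?_⟩
  rw [← map_pow, ← map_pow]
  exact hgf (by rw [map_pow, map_pow, hn])

theorem Aperiodic.of_surjective (hM : Aperiodic M) (f : M →* N) (hf : Surjective f) :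
    Aperiodic N :=
  hM.of_factorsThrough (MonoidHom.id M) f hf fun _ _ h => congrArg f h

end Aperiodic

theorem Finite.of_factorsThrough {M N P : Type*} [Finite N] (f : M → N) (g : M → P)
    (hg : Surjective g) (hgf : FactorsThrough g f) : Finite P := by
  refine Finite.of_surjective (fun y : Set.range f => g y.2.choose) fun p => ?_
  obtain ⟨x, rfl⟩ := hg p
  exact ⟨⟨f x, x, rfl⟩, hgf (Exists.choose_spec (⟨x, rfl⟩ : ∃ a, f a = f x))⟩

namespace FreeMonoid

variable {A : Type*}

theorem mul_eq_mul_iff {u v w₁ w₂ : FreeMonoid A} :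
    u * v = w₁ * w₂ ↔ (∃ t, w₁ = u * t ∧ v = t * w₂) ∨ ∃ t, u = w₁ * t ∧ w₂ = t * v := by
  rw [← toList.injective.eq_iff, toList_mul, toList_mul, List.append_eq_append_iff]
  simp only [toList.surjective.exists, ← toList_mul, toList.injective.eq_iff]

theorem of_mul_eq_of_mul_iff {a b : A} {x y : FreeMonoid A} :
    of a * x = of b * y ↔ a = b ∧ x = y := by
  rw [← toList.injective.eq_iff, toList_of_mul, toList_of_mul, List.cons.injEq,
    toList.injective.eq_iff]

theorem of_mul_ne_one (a : A) (x : FreeMonoid A) : of a * x ≠ 1 := by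
  simp [← length_eq_zero]

end FreeMonoid

section StarFree

variable {A : Type*}

theorem SF.empty : SF (∅ : Set (FreeMonoid A)) := by
  simpa using SF.full.diff SF.full

theorem SF.compl {K : Set (FreeMonoid A)} (h : SF K) : SF Kᶜ := by
  simpa [Set.compl_eq_univ_sdiff] using SF.full.diff h

theorem SF.inter {K K' : Set (FreeMonoid A)} (h : SF K) (h' : SF K') : SF (K ∩ K') := by
  simpa [Set.sdiff_compl] using h.diff h'.compl

theorem SF.sUnion {𝒦 : Set (Set (FreeMonoid A))} (h𝒦 : 𝒦.Finite) (h : ∀ K ∈ 𝒦, SF K) :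
    SF (⋃₀ 𝒦) := by
  induction 𝒦, h𝒦 using Set.Finite.induction_on with
  | empty => simpa using SF.empty
  | insert _ _ ih =>
    rw [Set.sUnion_insert]
    exact (h _ (Set.mem_insert _ _)).union (ih fun K hK => h K (Set.mem_insert_of_mem _ hK))

theorem SF.iUnion {ι : Sort*} [Finite ι] {K : ι → Set (FreeMonoid A)} (h : ∀ i, SF (K i)) :
    SF (⋃ i, K i) := by
  rw [← Set.sUnion_range]
  exact SF.sUnion (Set.finite_range K) (Set.forall_mem_range.2 h)

theorem SF.setOf_mem (a : A) : SF {w : FreeMonoid A | a ∈ w} := by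
  convert (SF.full.concat (SF.letter a)).concat SF.full using 1
  ext w
  constructor
  · intro h
    obtain ⟨s, t, hst⟩ := List.append_of_mem h
    exact ⟨ofList s * of a, ⟨ofList s, trivial, of a, rfl, rfl⟩, ofList t, trivial,
      toList.injective (by simpa using hst)⟩
  · rintro ⟨_, ⟨u, -, _, rfl, rfl⟩, v, -, rfl⟩
    simp

theorem SF.setOf_notMem (a : A) : SF {w : FreeMonoid A | a ∉ w} :=
  (SF.setOf_mem a).compl

theorem SF.singleton_one [Finite A] : SF ({1} : Set (FreeMonoid A)) := by
  have h := ((SF.iUnion fun a : A => SF.letter a).concat SF.full).compl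
  convert h using 1
  ext w
  cases w with
  | one => simp [Lang.cat, eq_comm (a := (1 : FreeMonoid A))]
  | of_mul a w => simpa [Lang.cat] using ⟨a, w, rfl⟩

end StarFree

def IsAperiodicRecognizable {A : Type*} (L : Set (FreeMonoid A)) : Prop :=
  ∃ (M : Type) (_ : Monoid M), Finite M ∧ Aperiodic M ∧
    ∃ (φ : FreeMonoid A →* M) (S : Set M), L = φ ⁻¹' S

section Recognizable

variable {A : Type*}

theorem isAperiodicRecognizable_iff_preimage_image {L : Set (FreeMonoid A)} :
    IsAperiodicRecognizable L ↔ ∃ (M : Type) (_ : Monoid M), Finite M ∧ Aperiodic M ∧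
      ∃ φ : FreeMonoid A →* M, φ ⁻¹' (φ '' L) = L := by
  constructor
  · rintro ⟨M, _, hfin, hM, φ, S, rfl⟩
    exact ⟨M, _, hfin, hM, φ, Set.preimage_image_preimage⟩
  · rintro ⟨M, _, hfin, hM, φ, hφ⟩
    exact ⟨M, _, hfin, hM, φ, φ '' L, hφ.symm⟩

theorem isAperiodicRecognizable_preimage {M : Type} [Monoid M] [Finite M] (hM : Aperiodic M)
    (φ : FreeMonoid A →* M) (S : Set M) : IsAperiodicRecognizable (φ ⁻¹' S) :=
  ⟨M, _, ‹_›, hM, φ, S, rfl⟩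

theorem isAperiodicRecognizable_univ : IsAperiodicRecognizable (Set.univ : Set (FreeMonoid A)) :=
  isAperiodicRecognizable_preimage (M := Unit) (fun _ => ⟨0, rfl⟩) 1 Set.univ

theorem IsAperiodicRecognizable.union {K K' : Set (FreeMonoid A)} (h : IsAperiodicRecognizable K)
    (h' : IsAperiodicRecognizable K') : IsAperiodicRecognizable (K ∪ K') := by
  obtain ⟨M, _, _, hM, φ, S, rfl⟩ := h
  obtain ⟨N, _, _, hN, ψ, S', rfl⟩ := h'
  exact isAperiodicRecognizable_preimage (hM.prod hN) (φ.prod ψ) (Prod.fst ⁻¹' S ∪ Prod.snd ⁻¹' S')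

theorem IsAperiodicRecognizable.diff {K K' : Set (FreeMonoid A)} (h : IsAperiodicRecognizable K)
    (h' : IsAperiodicRecognizable K') : IsAperiodicRecognizable (K \ K') := by
  obtain ⟨M, _, _, hM, φ, S, rfl⟩ := h
  obtain ⟨N, _, _, hN, ψ, S', rfl⟩ := h'
  exact isAperiodicRecognizable_preimage (hM.prod hN) (φ.prod ψ) (Prod.fst ⁻¹' S \ Prod.snd ⁻¹' S')

end Recognizable

inductive LetterMonoid : Type
  | one | letter | zero
  deriving DecidableEq

namespace LetterMonoid

instance : Fintype LetterMonoid :=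
  ⟨{one, letter, zero}, fun x => by cases x <;> decide⟩

instance : Monoid LetterMonoid where
  one := one
  mul
    | one, y => y
    | x, one => x
    | _, _ => zero
  one_mul x := by cases x <;> rfl
  mul_one x := by cases x <;> rfl
  mul_assoc x y z := by cases x <;> cases y <;> cases z <;> rfl

theorem aperiodic : Aperiodic LetterMonoid := fun x => ⟨2, by cases x <;> rfl⟩

theorem mul_eq_letter {x y : LetterMonoid} (h : x * y = letter) :
    x = letter ∧ y = 1 ∨ x = 1 ∧ y = letter := by
  cases x <;> cases y <;> revert h <;> decide

theorem mul_eq_one {x y : LetterMonoid} (h : x * y = 1) : x = 1 ∧ y = 1 := by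
  cases x <;> cases y <;> revert h <;> decide

variable {A : Type*}

open Classical in
noncomputable def hom (a : A) : FreeMonoid A →* LetterMonoid :=
  FreeMonoid.lift fun b => if b = a then letter else zero

theorem hom_of_ne_one (a b : A) : hom a (of b) ≠ 1 := by
  classical
  simp only [hom, lift_eval_of]
  split_ifs <;> decide

theorem eq_one_of_hom_eq_one (a : A) {w : FreeMonoid A} (h : hom a w = 1) : w = 1 := by
  cases w with
  | one => rfl
  | of_mul b w => exact absurd (mul_eq_one (map_mul (hom a) _ _ ▸ h)).1 (hom_of_ne_one a b)

theorem hom_eq_letter_iff (a : A) {w : FreeMonoid A} : hom a w = letter ↔ w = of a := by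
  classical
  refine ⟨fun h => ?_, fun h => by simp [h, hom]⟩
  cases w with
  | one => exact absurd ((map_one _).symm.trans h) (by decide)
  | of_mul b w =>
    rw [map_mul] at h
    rcases mul_eq_letter h with ⟨hb, hw⟩ | ⟨hb, -⟩
    · have hba : b = a := by_contra fun hba => by simp [hom, hba] at hb
      rw [hba, eq_one_of_hom_eq_one a hw, mul_one]
    · exact absurd hb (hom_of_ne_one a b)

end LetterMonoid

theorem isAperiodicRecognizable_singleton_of {A : Type*} (a : A) :
    IsAperiodicRecognizable ({of a} : Set (FreeMonoid A)) := by
  convert isAperiodicRecognizable_preimage LetterMonoid.aperiodic (LetterMonoid.hom a)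
    {LetterMonoid.letter} using 1
  ext w
  exact (LetterMonoid.hom_eq_letter_iff a).symm

@[ext]
structure SchutzenbergerProduct (M N : Type*) where
  left : M
  mid : Set (M × N)
  right : N

namespace SchutzenbergerProduct

variable {M N : Type*} [Monoid M] [Monoid N]

instance : One (SchutzenbergerProduct M N) := ⟨⟨1, ∅, 1⟩⟩

instance : Mul (SchutzenbergerProduct M N) :=
  ⟨fun x y => ⟨x.left * y.left,
    (fun r => (r.1, r.2 * y.right)) '' x.mid ∪ (fun r => (x.left * r.1, r.2)) '' y.mid,
    x.right * y.right⟩⟩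

@[simp] theorem one_left : (1 : SchutzenbergerProduct M N).left = 1 := rfl
@[simp] theorem one_mid : (1 : SchutzenbergerProduct M N).mid = ∅ := rfl
@[simp] theorem one_right : (1 : SchutzenbergerProduct M N).right = 1 := rfl
@[simp] theorem mul_left (x y : SchutzenbergerProduct M N) : (x * y).left = x.left * y.left := rfl
@[simp] theorem mul_right (x y : SchutzenbergerProduct M N) :
    (x * y).right = x.right * y.right := rfl
theorem mul_mid (x y : SchutzenbergerProduct M N) : (x * y).mid =
    (fun r => (r.1, r.2 * y.right)) '' x.mid ∪ (fun r => (x.left * r.1, r.2)) '' y.mid := rfl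

instance : Monoid (SchutzenbergerProduct M N) where
  one_mul x := by ext <;> simp [mul_mid]
  mul_one x := by ext <;> simp [mul_mid]
  mul_assoc x y z := by
    ext : 1
    · exact mul_assoc x.left y.left z.left
    · simp only [mul_mid, mul_left, mul_right, Set.image_union, Set.image_image, mul_assoc,
        Set.union_assoc]
    · exact mul_assoc x.right y.right z.right

instance [Finite M] [Finite N] : Finite (SchutzenbergerProduct M N) :=
  Finite.of_injective (fun x => (x.left, x.mid, x.right)) fun x y h => by
    simp only [Prod.mk.injEq] at h
    exact SchutzenbergerProduct.ext h.1 h.2.1 h.2.2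

@[simp] theorem pow_left (x : SchutzenbergerProduct M N) (k : ℕ) :
    (x ^ k).left = x.left ^ k := by
  induction k with
  | zero => rw [pow_zero, pow_zero, one_left]
  | succ k ih => rw [pow_succ, pow_succ, mul_left, ih]

@[simp] theorem pow_right (x : SchutzenbergerProduct M N) (k : ℕ) :
    (x ^ k).right = x.right ^ k := by
  induction k with
  | zero => rw [pow_zero, pow_zero, one_right]
  | succ k ih => rw [pow_succ, pow_succ, mul_right, ih]

theorem mem_pow_mid {x : SchutzenbergerProduct M N} {k : ℕ} {r : M × N} :
    r ∈ (x ^ k).mid ↔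
      ∃ i j, i + j + 1 = k ∧ ∃ s ∈ x.mid, r = (x.left ^ i * s.1, s.2 * x.right ^ j) := by
  induction k generalizing r with
  | zero => simp
  | succ k ih =>
    rw [pow_succ, mul_mid]
    simp only [Set.mem_union, Set.mem_image, ih, pow_left]
    constructor
    · rintro (⟨_, ⟨i, j, rfl, s, hs, rfl⟩, rfl⟩ | ⟨s, hs, rfl⟩)
      · exact ⟨i, j + 1, by omega, s, hs, by simp [pow_succ, mul_assoc]⟩
      · exact ⟨k, 0, by omega, s, hs, by simp⟩
    · rintro ⟨i, j, hij, s, hs, rfl⟩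
      cases j with
      | zero => exact Or.inr ⟨s, hs, by simp [show i = k by omega]⟩
      | succ j => exact Or.inl ⟨_, ⟨i, j, by omega, s, hs, rfl⟩, by simp [pow_succ, mul_assoc]⟩

-- The middle component of `x ^ k` only depends on the pairs `(left ^ i, right ^ j)` with
-- `i + j + 1 = k`, and these stop changing once `k > 2 n`.
theorem aperiodic (hM : Aperiodic M) (hN : Aperiodic N) :
    Aperiodic (SchutzenbergerProduct M N) := by
  intro x
  obtain ⟨n₁, h₁⟩ := hM.exists_pow_eq_of_le x.left
  obtain ⟨n₂, h₂⟩ := hN.exists_pow_eq_of_le x.right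
  obtain ⟨n, hn₁, hn₂⟩ : ∃ n, n₁ ≤ n ∧ n₂ ≤ n := ⟨max n₁ n₂, le_max_left _ _, le_max_right _ _⟩
  have hl : ∀ i, n ≤ i → x.left ^ i = x.left ^ (i + 1) := fun i hi => by
    rw [h₁ i (by omega), h₁ (i + 1) (by omega)]
  have hr : ∀ j, n ≤ j → x.right ^ j = x.right ^ (j + 1) := fun j hj => by
    rw [h₂ j (by omega), h₂ (j + 1) (by omega)]
  refine ⟨2 * n + 1, SchutzenbergerProduct.ext ?_ ?_ ?_⟩
  · simp only [pow_left, hl _ (show n ≤ 2 * n + 1 by omega)]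
  · ext r
    simp only [mem_pow_mid]
    constructor
    · rintro ⟨i, j, hij, s, hs, rfl⟩
      by_cases hi : n ≤ i
      · exact ⟨i + 1, j, by omega, s, hs, by rw [hl i hi]⟩
      · exact ⟨i, j + 1, by omega, s, hs, by rw [hr j (by omega)]⟩
    · rintro ⟨i, j, hij, s, hs, rfl⟩
      by_cases hi : n + 1 ≤ i
      · obtain ⟨i, rfl⟩ : ∃ i', i = i' + 1 := ⟨i - 1, by omega⟩
        exact ⟨i, j, by omega, s, hs, by rw [hl i (by omega)]⟩
      · obtain ⟨j, rfl⟩ : ∃ j', j = j' + 1 := ⟨j - 1, by omega⟩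
        exact ⟨i, j, by omega, s, hs, by rw [hr j (by omega)]⟩
  · simp only [pow_right, hr _ (show n ≤ 2 * n + 1 by omega)]

end SchutzenbergerProduct

section Concatenation

variable {A M N : Type*} [Monoid M] [Monoid N] (φ : FreeMonoid A →* M) (ψ : FreeMonoid A →* N)

def splitValues (w : FreeMonoid A) : Set (M × N) :=
  {r | ∃ u v, u * v = w ∧ v ≠ 1 ∧ r = (φ u, ψ v)}

theorem splitValues_one : splitValues φ ψ 1 = ∅ := by
  ext r
  simp [splitValues]

theorem splitValues_mul (w₁ w₂ : FreeMonoid A) :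
    splitValues φ ψ (w₁ * w₂) = (fun r => (r.1, r.2 * ψ w₂)) '' splitValues φ ψ w₁ ∪
      (fun r => (φ w₁ * r.1, r.2)) '' splitValues φ ψ w₂ := by
  ext r
  simp only [splitValues, Set.mem_union, Set.mem_image, Set.mem_ofPred_eq]
  constructor
  · rintro ⟨u, v, huv, hv, rfl⟩
    rcases FreeMonoid.mul_eq_mul_iff.1 huv with ⟨t, rfl, rfl⟩ | ⟨t, rfl, rfl⟩
    · rcases eq_or_ne t 1 with rfl | ht
      · exact Or.inr ⟨_, ⟨1, w₂, one_mul w₂, by simpa using hv, rfl⟩, by simp⟩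
      · exact Or.inl ⟨_, ⟨u, t, rfl, ht, rfl⟩, by simp⟩
    · exact Or.inr ⟨_, ⟨t, v, rfl, hv, rfl⟩, by simp⟩
  · rintro (⟨_, ⟨u, v, rfl, hv, rfl⟩, rfl⟩ | ⟨_, ⟨u, v, rfl, hv, rfl⟩, rfl⟩)
    · exact ⟨u, v * w₂, (mul_assoc _ _ _).symm, by simp [hv], by simp⟩
    · exact ⟨w₁ * u, v, mul_assoc _ _ _, hv, by simp⟩

def splitHom : FreeMonoid A →* SchutzenbergerProduct M N where
  toFun w := ⟨φ w, splitValues φ ψ w, ψ w⟩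
  map_one' := by ext <;> simp [splitValues_one]
  map_mul' w₁ w₂ := by ext <;> simp [splitValues_mul, SchutzenbergerProduct.mul_mid]

-- A factorization `w = u v` with `v = 1` is invisible in `splitValues`; it is read off `φ w`.
theorem cat_preimage_eq_preimage_splitHom (S : Set M) (S' : Set N) :
    Lang.cat (φ ⁻¹' S) (ψ ⁻¹' S') = splitHom φ ψ ⁻¹'
      {x | x.left ∈ S ∧ (1 : N) ∈ S' ∨ ∃ r ∈ x.mid, r.1 ∈ S ∧ r.2 ∈ S'} := by
  ext w
  simp only [Lang.cat, splitHom, splitValues, Set.mem_preimage, Set.mem_ofPred_eq,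
    MonoidHom.coe_mk, OneHom.coe_mk]
  constructor
  · rintro ⟨u, hu, v, hv, rfl⟩
    rcases eq_or_ne v 1 with rfl | hv1
    · exact Or.inl ⟨by simpa using hu, by simpa using hv⟩
    · exact Or.inr ⟨_, ⟨u, v, rfl, hv1, rfl⟩, hu, hv⟩
  · rintro (⟨hw, h1⟩ | ⟨_, ⟨u, v, rfl, -, rfl⟩, hu, hv⟩)
    · exact ⟨w, hw, 1, by simpa using h1, (mul_one w).symm⟩
    · exact ⟨u, hu, v, hv, rfl⟩

end Concatenation

theorem IsAperiodicRecognizable.cat {A : Type*} {K K' : Set (FreeMonoid A)}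
    (h : IsAperiodicRecognizable K) (h' : IsAperiodicRecognizable K') :
    IsAperiodicRecognizable (Lang.cat K K') := by
  obtain ⟨M, _, _, hM, φ, S, rfl⟩ := h
  obtain ⟨N, _, _, hN, ψ, S', rfl⟩ := h'
  rw [cat_preimage_eq_preimage_splitHom]
  exact isAperiodicRecognizable_preimage (SchutzenbergerProduct.aperiodic hM hN) _ _

theorem SF.isAperiodicRecognizable {A : Type*} {L : Set (FreeMonoid A)} (h : SF L) :
    IsAperiodicRecognizable L := by
  induction h with
  | full => exact isAperiodicRecognizable_univ
  | letter a => exact isAperiodicRecognizable_singleton_of a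
  | union _ _ ih ih' => exact ih.union ih'
  | diff _ _ ih ih' => exact ih.diff ih'
  | concat _ _ ih ih' => exact ih.cat ih'

section Syntactic

variable {A : Type*}

theorem syntacticCon_preimage_of_map_eq {M : Type*} [Monoid M] (φ : FreeMonoid A →* M)
    (S : Set M) {u v : FreeMonoid A} (h : φ u = φ v) : syntacticCon (φ ⁻¹' S) u v := by
  intro p q
  simp only [Set.mem_preimage, map_mul, h]

theorem preimage_image_mk'_syntacticCon (L : Set (FreeMonoid A)) :
    (syntacticCon L).mk' ⁻¹' ((syntacticCon L).mk' '' L) = L := by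
  refine Set.Subset.antisymm (fun w ⟨u, hu, huw⟩ => ?_) (Set.subset_preimage_image _ _)
  simpa using ((syntacticCon L).eq.1 huw 1 1).1 (by simpa using hu)

theorem IsAperiodicRecognizable.finite_aperiodic_syntactic {L : Set (FreeMonoid A)}
    (h : IsAperiodicRecognizable L) :
    Finite (syntacticCon L).Quotient ∧ Aperiodic (syntacticCon L).Quotient := by
  obtain ⟨M, _, _, hM, φ, S, rfl⟩ := h
  have hfac : FactorsThrough (syntacticCon (φ ⁻¹' S)).mk' φ := fun _ _ h =>
    (Con.eq _).2 (syntacticCon_preimage_of_map_eq φ S h)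
  exact ⟨Finite.of_factorsThrough φ _ Con.mk'_surjective hfac,
    hM.of_factorsThrough φ _ Con.mk'_surjective hfac⟩

theorem isAperiodicRecognizable_of_syntactic {L : Set (FreeMonoid A)}
    [Finite (syntacticCon L).Quotient] (hL : Aperiodic (syntacticCon L).Quotient) :
    IsAperiodicRecognizable L := by
  let e : Shrink.{0} (syntacticCon L).Quotient ≃* (syntacticCon L).Quotient := Shrink.mulEquiv
  refine ⟨_, inferInstance, Finite.of_equiv _ e.toEquiv.symm,
    hL.of_surjective e.symm.toMonoidHom e.symm.surjective,
    e.symm.toMonoidHom.comp (syntacticCon L).mk', e ⁻¹' ((syntacticCon L).mk' '' L), ?_⟩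
  ext w
  conv_lhs => rw [← preimage_image_mk'_syntacticCon L]
  simp

end Syntactic

-- The language `((A \ {c})* c)*`.
inductive IsBlockSeq {A : Type*} (c : A) : FreeMonoid A → Prop
  | one : IsBlockSeq c 1
  | block {u w : FreeMonoid A} : c ∉ u → IsBlockSeq c w → IsBlockSeq c (u * of c * w)

namespace IsBlockSeq

variable {A : Type*} {c : A}

theorem mul {w₁ w₂ : FreeMonoid A} (h₁ : IsBlockSeq c w₁) (h₂ : IsBlockSeq c w₂) :
    IsBlockSeq c (w₁ * w₂) := by
  induction h₁ with
  | one => rwa [one_mul]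
  | block hu _ ih => rw [mul_assoc]; exact block hu ih

theorem exists_eq_mul (c : A) (w : FreeMonoid A) :
    ∃ z v, IsBlockSeq c z ∧ c ∉ v ∧ w = z * v := by
  induction w using FreeMonoid.inductionOn' with
  | one => exact ⟨1, 1, one, notMem_one, rfl⟩
  | of_mul a w ih =>
    obtain ⟨z, v, hz, hv, rfl⟩ := ih
    by_cases hac : a = c
    · subst hac
      exact ⟨of a * z, v, by simpa using block notMem_one hz, hv, (mul_assoc _ _ _).symm⟩
    · cases hz with
      | one => exact ⟨1, of a * v, one, by simp [hv, Ne.symm hac], by simp⟩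
      | @block u r hu hr =>
        exact ⟨of a * u * of c * r, v, block (by simp [Ne.symm hac, hu]) hr, hv,
          by simp only [mul_assoc]⟩

theorem iff_eq_one_or_exists {w : FreeMonoid A} :
    IsBlockSeq c w ↔ w = 1 ∨ ∃ u, w = u * of c := by
  constructor
  · intro h
    induction h with
    | one => exact Or.inl rfl
    | @block u w _ _ ih =>
      rcases ih with rfl | ⟨u', rfl⟩
      · exact Or.inr ⟨u, mul_one _⟩
      · exact Or.inr ⟨u * of c * u', by simp only [mul_assoc]⟩
  · rintro (rfl | ⟨u, rfl⟩)
    · exact one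
    · obtain ⟨z, v, hz, hv, rfl⟩ := exists_eq_mul c u
      simpa [mul_assoc] using hz.mul (block hv one)

end IsBlockSeq

theorem SF.setOf_isBlockSeq {A : Type*} [Finite A] (c : A) :
    SF {w : FreeMonoid A | IsBlockSeq c w} := by
  convert SF.singleton_one.union (SF.full.concat (SF.letter c)) using 1
  ext w
  simp [IsBlockSeq.iff_eq_one_or_exists, Lang.cat]

section BlockValues

variable {A M : Type*} [DecidableEq A] [Monoid M] (c : A) (φ : FreeMonoid A →* M)

-- `acc` is the `φ`-value of the part of the current block read so far.
def blockValuesAux (acc : M) : List A → FreeMonoid M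
  | [] => 1
  | a :: t => if a = c then of acc * blockValuesAux 1 t else blockValuesAux (acc * φ (of a)) t

def blockValues (w : FreeMonoid A) : FreeMonoid M :=
  blockValuesAux c φ 1 (toList w)

theorem blockValuesAux_append_cons {u : List A} (hu : c ∉ u) (acc : M) (t : List A) :
    blockValuesAux c φ acc (u ++ c :: t) = of (acc * φ (ofList u)) * blockValuesAux c φ 1 t := by
  induction u generalizing acc with
  | nil => simp [blockValuesAux]
  | cons a u ih =>
    simp only [List.mem_cons, not_or] at hu
    simp [blockValuesAux, Ne.symm hu.1, ih hu.2, mul_assoc]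

@[simp] theorem blockValues_one : blockValues c φ 1 = 1 := rfl

theorem blockValues_block {u : FreeMonoid A} (hu : c ∉ u) (w : FreeMonoid A) :
    blockValues c φ (u * of c * w) = of (φ u) * blockValues c φ w := by
  simpa [blockValues] using blockValuesAux_append_cons c φ (u := toList u) hu 1 (toList w)

variable {c φ}

theorem IsBlockSeq.blockValues_mul {w₁ : FreeMonoid A} (h : IsBlockSeq c w₁) (w₂ : FreeMonoid A) :
    blockValues c φ (w₁ * w₂) = blockValues c φ w₁ * blockValues c φ w₂ := by
  induction h with
  | one => simp
  | block hu _ ih => rw [mul_assoc, blockValues_block c φ hu, blockValues_block c φ hu, ih,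
      mul_assoc]

theorem IsBlockSeq.exists_of_blockValues_eq_of {w : FreeMonoid A} (h : IsBlockSeq c w) {g : M}
    (hw : blockValues c φ w = of g) : ∃ u, c ∉ u ∧ φ u = g ∧ w = u * of c := by
  cases h with
  | one => exact absurd hw (FreeMonoid.one_ne_of g)
  | @block u r hu hr =>
    rw [blockValues_block c φ hu, ← mul_one (of g), FreeMonoid.of_mul_eq_of_mul_iff] at hw
    cases hr with
    | one => exact ⟨u, hu, hw.1, mul_one _⟩
    | block hu' _ =>
      exact absurd hw.2 (by rw [blockValues_block c φ hu']; exact FreeMonoid.of_mul_ne_one _ _)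

theorem IsBlockSeq.exists_of_blockValues_eq_mul {w : FreeMonoid A} (h : IsBlockSeq c w)
    {s₁ s₂ : FreeMonoid M} (hw : blockValues c φ w = s₁ * s₂) :
    ∃ w₁ w₂, IsBlockSeq c w₁ ∧ IsBlockSeq c w₂ ∧ w = w₁ * w₂ ∧
      blockValues c φ w₁ = s₁ ∧ blockValues c φ w₂ = s₂ := by
  induction h generalizing s₁ with
  | one =>
    cases s₁ with
    | one => exact ⟨1, 1, .one, .one, rfl, rfl, by simpa using hw⟩
    | of_mul g s₁ => exact absurd hw.symm (by rw [mul_assoc]; exact FreeMonoid.of_mul_ne_one _ _)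
  | @block u r hu hr ih =>
    cases s₁ with
    | one => exact ⟨1, _, .one, .block hu hr, (one_mul _).symm, rfl, by simpa using hw⟩
    | of_mul g s₁ =>
      rw [blockValues_block c φ hu, mul_assoc, FreeMonoid.of_mul_eq_of_mul_iff] at hw
      obtain ⟨r₁, r₂, hr₁, hr₂, rfl, rfl, rfl⟩ := ih hw.2
      exact ⟨u * of c * r₁, r₂, .block hu hr₁, hr₂, by simp only [mul_assoc],
        by rw [blockValues_block c φ hu, hw.1], rfl⟩

end BlockValues

section BlockPreimage

variable {A M : Type*} [DecidableEq A] [Monoid M] (c : A) (φ : FreeMonoid A →* M)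

def fiberAvoiding (p : M) : Set (FreeMonoid A) :=
  {w | φ w = p ∧ c ∉ w}

def blockPreimage (P : Set (FreeMonoid M)) : Set (FreeMonoid A) :=
  {w | IsBlockSeq c w ∧ blockValues c φ w ∈ P}

theorem blockPreimage_univ : blockPreimage c φ Set.univ = {w | IsBlockSeq c w} := by
  simp [blockPreimage]

theorem blockPreimage_singleton_of (g : M) :
    blockPreimage c φ {of g} = Lang.cat (fiberAvoiding c φ g) {of c} := by
  ext w
  simp only [blockPreimage, fiberAvoiding, Lang.cat, Set.mem_singleton_iff]
  constructor
  · rintro ⟨hw, hg⟩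
    obtain ⟨u, hu, rfl, rfl⟩ := hw.exists_of_blockValues_eq_of hg
    exact ⟨u, ⟨rfl, hu⟩, _, rfl, rfl⟩
  · rintro ⟨u, ⟨rfl, hu⟩, _, rfl, rfl⟩
    refine ⟨by simpa using IsBlockSeq.block hu .one, by simpa using blockValues_block c φ hu 1⟩

theorem blockPreimage_union (P P' : Set (FreeMonoid M)) :
    blockPreimage c φ (P ∪ P') = blockPreimage c φ P ∪ blockPreimage c φ P' := by
  ext w
  simp only [blockPreimage, Set.mem_union, Set.mem_ofPred_eq, and_or_left]

theorem blockPreimage_diff (P P' : Set (FreeMonoid M)) :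
    blockPreimage c φ (P \ P') = blockPreimage c φ P \ blockPreimage c φ P' := by
  ext w
  simp only [blockPreimage, Set.mem_sdiff, Set.mem_ofPred_eq]
  tauto

theorem blockPreimage_cat (P P' : Set (FreeMonoid M)) :
    blockPreimage c φ (Lang.cat P P') = Lang.cat (blockPreimage c φ P) (blockPreimage c φ P') := by
  ext w
  simp only [blockPreimage, Lang.cat, Set.mem_ofPred_eq]
  constructor
  · rintro ⟨hw, s, hs, s', hs', hss'⟩
    obtain ⟨w₁, w₂, hw₁, hw₂, rfl, rfl, rfl⟩ := hw.exists_of_blockValues_eq_mul hss'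
    exact ⟨w₁, ⟨hw₁, hs⟩, w₂, ⟨hw₂, hs'⟩, rfl⟩
  · rintro ⟨w₁, ⟨hw₁, hs⟩, w₂, ⟨hw₂, hs'⟩, rfl⟩
    exact ⟨hw₁.mul hw₂, _, hs, _, hs', hw₁.blockValues_mul w₂⟩

variable {c φ}

theorem SF.blockPreimage [Finite A] (hK : ∀ p, SF (fiberAvoiding c φ p))
    {P : Set (FreeMonoid M)} (hP : SF P) : SF (blockPreimage c φ P) := by
  induction hP with
  | full => rw [blockPreimage_univ]; exact SF.setOf_isBlockSeq c
  | letter g => rw [blockPreimage_singleton_of]; exact (hK g).concat (.letter c)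
  | union _ _ ih ih' => rw [blockPreimage_union]; exact ih.union ih'
  | diff _ _ ih ih' => rw [blockPreimage_diff]; exact ih.diff ih'
  | concat _ _ ih ih' => rw [blockPreimage_cat]; exact ih.concat ih'

end BlockPreimage

def localDivisorSet {M : Type*} [Monoid M] (x : M) : Set M :=
  {y | (∃ s, y = s * x) ∧ ∃ t, y = x * t}

theorem mul_mem_localDivisorSet {M : Type*} [Monoid M] {x y z s : M}
    (hy : y ∈ localDivisorSet x) (hs : y = s * x) (hz : z ∈ localDivisorSet x) :
    s * z ∈ localDivisorSet x := by
  obtain ⟨-, t, rfl⟩ := hy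
  obtain ⟨⟨s', rfl⟩, t', ht'⟩ := hz
  refine ⟨⟨s * s', (mul_assoc _ _ _).symm⟩, t * t', ?_⟩
  rw [ht', ← mul_assoc, ← hs, mul_assoc]

def LocalDivisor {M : Type*} [Monoid M] (x : M) : Type _ := localDivisorSet x

namespace LocalDivisor

variable {M : Type*} [Monoid M] {x : M}

instance : One (LocalDivisor x) := ⟨⟨x, ⟨1, (one_mul x).symm⟩, ⟨1, (mul_one x).symm⟩⟩⟩

-- `(s x) ∘ y = s y`; this does not depend on the choice of `s` because `y ∈ x M`.
noncomputable instance : Mul (LocalDivisor x) :=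
  ⟨fun a b => ⟨a.2.1.choose * b.1, mul_mem_localDivisorSet a.2 a.2.1.choose_spec b.2⟩⟩

theorem val_one : (1 : LocalDivisor x).1 = x := rfl

theorem val_mul_of_eq_mul_left {a : LocalDivisor x} {s : M} (hs : a.1 = s * x)
    (b : LocalDivisor x) : (a * b).1 = s * b.1 := by
  obtain ⟨t, ht⟩ := b.2.2
  change a.2.1.choose * b.1 = s * b.1
  rw [ht, ← mul_assoc, ← mul_assoc, ← a.2.1.choose_spec, hs]

theorem val_mul_of_eq_mul_right (a : LocalDivisor x) {b : LocalDivisor x} {t : M}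
    (ht : b.1 = x * t) : (a * b).1 = a.1 * t := by
  obtain ⟨s, hs⟩ := a.2.1
  rw [val_mul_of_eq_mul_left hs, ht, hs, mul_assoc]

noncomputable instance : Monoid (LocalDivisor x) where
  one_mul a := Subtype.ext <| by rw [val_mul_of_eq_mul_left (one_mul x).symm, one_mul]
  mul_one a := Subtype.ext <| by rw [val_mul_of_eq_mul_right a (mul_one x).symm, mul_one]
  mul_assoc a b c := Subtype.ext <| by
    obtain ⟨s, hs⟩ := a.2.1
    obtain ⟨t, ht⟩ := c.2.2
    rw [val_mul_of_eq_mul_right _ ht, val_mul_of_eq_mul_left hs, val_mul_of_eq_mul_left hs,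
      val_mul_of_eq_mul_right _ ht, mul_assoc]

instance [Finite M] : Finite (LocalDivisor x) := Subtype.finite (α := M)

theorem val_pow_succ {a : LocalDivisor x} {t : M} (ht : a.1 = x * t) (k : ℕ) :
    (a ^ (k + 1)).1 = a.1 * t ^ k := by
  induction k with
  | zero => rw [zero_add, pow_one, pow_zero, mul_one]
  | succ k ih => rw [pow_succ, val_mul_of_eq_mul_right _ ht, ih, pow_succ, mul_assoc]

theorem aperiodic (hM : Aperiodic M) : Aperiodic (LocalDivisor x) := by
  intro a
  obtain ⟨t, ht⟩ := a.2.2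
  obtain ⟨n, hn⟩ := hM t
  exact ⟨n + 1, Subtype.ext <| by rw [val_pow_succ ht, val_pow_succ ht, hn]⟩

-- `1 ∈ M x ∩ x M` would make `x` a unit, and the only unit of an aperiodic monoid is `1`.
theorem card_lt [Finite M] (hM : Aperiodic M) (hx : x ≠ 1) :
    Nat.card (LocalDivisor x) < Nat.card M := by
  refine Finite.card_subtype_lt (x := 1) fun ⟨⟨s, hs⟩, ⟨t, ht⟩⟩ => hx (hM.eq_one_of_isUnit ?_)
  exact isUnit_iff_exists_and_exists.2 ⟨⟨t, ht.symm⟩, ⟨s, hs.symm⟩⟩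

noncomputable def hom (x : M) : FreeMonoid M →* LocalDivisor x :=
  FreeMonoid.lift fun g => ⟨x * g * x, ⟨x * g, rfl⟩, ⟨g * x, by rw [mul_assoc]⟩⟩

theorem val_hom_of_mul (g : M) (s : FreeMonoid M) : (hom x (of g * s)).1 = x * g * (hom x s).1 :=
  by rw [map_mul]; exact val_mul_of_eq_mul_left rfl _

end LocalDivisor

section LocalDivisorInduction

variable {A M : Type*} [DecidableEq A] [Monoid M] {c : A} {φ : FreeMonoid A →* M}

theorem IsBlockSeq.val_hom_blockValues {w : FreeMonoid A} (h : IsBlockSeq c w) :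
    (LocalDivisor.hom (φ (of c)) (blockValues c φ w)).1 = φ (of c) * φ w := by
  induction h with
  | one => simp [LocalDivisor.val_one]
  | block hu _ ih =>
    rw [blockValues_block c φ hu, LocalDivisor.val_hom_of_mul, ih]
    simp only [map_mul, mul_assoc]

-- A word containing `c` is `u c z v` with `u, v` avoiding `c` and `z` a sequence of `c`-blocks.
variable (c φ) in
theorem preimage_singleton_eq_union (m : M) :
    φ ⁻¹' {m} = fiberAvoiding c φ m ∪
      ⋃ (p : M) (e : LocalDivisor (φ (of c))) (q : M) (_ : p * e.1 * q = m),
        Lang.cat (Lang.cat (Lang.cat (fiberAvoiding c φ p) {of c})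
          (blockPreimage c φ (LocalDivisor.hom _ ⁻¹' {e}))) (fiberAvoiding c φ q) := by
  ext w
  simp only [Set.mem_preimage, Set.mem_singleton_iff, Set.mem_union, Set.mem_iUnion,
    fiberAvoiding, blockPreimage, Lang.cat, Set.mem_ofPred_eq]
  constructor
  · rintro rfl
    by_cases hc : c ∈ w
    · right
      obtain ⟨z, v, hz, hv, rfl⟩ := IsBlockSeq.exists_eq_mul c w
      cases hz with
      | one => simp_all
      | @block u r hu hr =>
        refine ⟨φ u, _, φ v, ?_, _, ⟨_, ⟨u, ⟨rfl, hu⟩, _, rfl, rfl⟩, r, ⟨hr, rfl⟩, rfl⟩, v,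
          ⟨rfl, hv⟩, rfl⟩
        rw [hr.val_hom_blockValues]
        simp only [map_mul, mul_assoc]
    · exact Or.inl ⟨rfl, hc⟩
  · rintro (⟨rfl, -⟩ | ⟨p, e, q, rfl, _, ⟨_, ⟨u, ⟨rfl, -⟩, _, rfl, rfl⟩, r, ⟨hr, rfl⟩, rfl⟩, v,
      ⟨rfl, -⟩, rfl⟩)
    · rfl
    · rw [hr.val_hom_blockValues]
      simp only [map_mul, mul_assoc]

theorem SF.preimage_singleton_of_fiberAvoiding [Finite A] [Finite M]
    (hK : ∀ p, SF (fiberAvoiding c φ p))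
    (hL : ∀ e, SF (LocalDivisor.hom (φ (of c)) ⁻¹' {e})) (m : M) : SF (φ ⁻¹' {m}) := by
  rw [preimage_singleton_eq_union c φ m]
  exact (hK m).union <| SF.iUnion fun p => SF.iUnion fun e => SF.iUnion fun q => SF.iUnion fun _ =>
    (((hK p).concat (.letter c)).concat (SF.blockPreimage hK (hL e))).concat (hK q)

variable (c φ) in
noncomputable def killLetter : FreeMonoid A →* M :=
  FreeMonoid.lift (Function.update (fun a => φ (of a)) c 1)

theorem killLetter_apply_of_notMem {w : FreeMonoid A} (hw : c ∉ w) : killLetter c φ w = φ w := by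
  induction w using FreeMonoid.inductionOn' with
  | one => simp
  | of_mul a w ih =>
    simp only [mem_mul, mem_of, not_or] at hw
    simp [killLetter, Function.update_of_ne (Ne.symm hw.1), ← ih hw.2]

theorem fiberAvoiding_eq_preimage_killLetter_inter (p : M) :
    fiberAvoiding c φ p = killLetter c φ ⁻¹' {p} ∩ {w | c ∉ w} := by
  ext w
  simp only [fiberAvoiding, Set.mem_inter_iff, Set.mem_preimage, Set.mem_singleton_iff,
    Set.mem_ofPred_eq]
  exact ⟨fun ⟨h, hw⟩ => ⟨(killLetter_apply_of_notMem hw).trans h, hw⟩,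
    fun ⟨h, hw⟩ => ⟨(killLetter_apply_of_notMem hw).symm.trans h, hw⟩⟩

theorem ncard_killLetter_lt [Finite A] (hc : φ (of c) ≠ 1) :
    {a | killLetter c φ (of a) ≠ 1}.ncard < {a | φ (of a) ≠ 1}.ncard := by
  have : {a | killLetter c φ (of a) ≠ 1} = {a | φ (of a) ≠ 1} \ {c} := by
    ext a
    by_cases hac : a = c <;> simp [killLetter, hac]
  rw [this]
  exact Set.ncard_sdiff_singleton_lt_of_mem hc

end LocalDivisorInduction

theorem SF.preimage_singleton_of_forall_eq_one {A M : Type*} [Monoid M] {φ : FreeMonoid A →* M}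
    (h : ∀ a, φ (of a) = 1) (m : M) : SF (φ ⁻¹' {m}) := by
  obtain rfl : φ = 1 := FreeMonoid.hom_eq h
  by_cases hm : (1 : M) = m
  · simpa [Set.preimage, hm] using SF.full
  · simpa [Set.preimage, hm] using SF.empty

theorem SF.preimage_singleton_of_aperiodic {A M : Type u} [Finite A] [Monoid M] [Finite M]
    (hM : Aperiodic M) (φ : FreeMonoid A →* M) (m : M) : SF (φ ⁻¹' {m}) := by
  classical
  obtain ⟨n, hn⟩ : ∃ n, Nat.card M = n := ⟨_, rfl⟩
  induction n using Nat.strong_induction_on generalizing A M with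
  | _ n ihM =>
  obtain ⟨k, hk⟩ : ∃ k, {a | φ (of a) ≠ 1}.ncard = k := ⟨_, rfl⟩
  induction k using Nat.strong_induction_on generalizing φ m with
  | _ k ihA =>
  by_cases h1 : ∀ a, φ (of a) = 1
  · exact SF.preimage_singleton_of_forall_eq_one h1 m
  obtain ⟨c, hc⟩ := not_forall.1 h1
  refine SF.preimage_singleton_of_fiberAvoiding (c := c) (fun p => ?_) (fun e => ?_) m
  · rw [fiberAvoiding_eq_preimage_killLetter_inter]
    exact (ihA _ (hk ▸ ncard_killLetter_lt hc) _ p rfl).inter (SF.setOf_notMem c)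
  · exact ihM _ (hn ▸ LocalDivisor.card_lt hM hc) (LocalDivisor.aperiodic hM) _ e rfl

theorem SF.of_isAperiodicRecognizable {A : Type u} [Finite A] {L : Set (FreeMonoid A)}
    (h : IsAperiodicRecognizable L) : SF L := by
  obtain ⟨M, _, _, hM, φ, S, rfl⟩ := h
  let e : M ≃* ULift.{u} M := MulEquiv.ulift.symm
  have hS : φ ⁻¹' S = ⋃ m : S, (e.toMonoidHom.comp φ) ⁻¹' {e m} := by
    ext w
    simp
  rw [hS]
  exact SF.iUnion fun m => SF.preimage_singleton_of_aperiodic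
    (hM.of_surjective e.toMonoidHom e.surjective) _ _

/-- **Schützenberger's theorem.**  For a language `L ⊆ A*` over a finite alphabet `A`,
the following are equivalent: (1) `L` is star-free; (2) the syntactic monoid
`Synt(L) = A*/≡_L` is finite and aperiodic; (3) `L` is recognized by a finite aperiodic
monoid, i.e. there are a finite aperiodic monoid `M` and a homomorphism `φ : A* → M`
with `φ⁻¹(φ(L)) = L`. -/
theorem schutzenberger {A : Type*} [Finite A] (L : Set (FreeMonoid A)) :
    (SF L ↔
      Finite (syntacticCon L).Quotient ∧ Aperiodic (syntacticCon L).Quotient) ∧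
    (SF L ↔
      ∃ (M : Type) (_ : Monoid M), Finite M ∧ Aperiodic M ∧
        ∃ φ : FreeMonoid A →* M, φ ⁻¹' (φ '' L) = L) := by
  have hSF : SF L ↔ IsAperiodicRecognizable L :=
    ⟨SF.isAperiodicRecognizable, SF.of_isAperiodicRecognizable⟩
  have hSynt : IsAperiodicRecognizable L ↔
      Finite (syntacticCon L).Quotient ∧ Aperiodic (syntacticCon L).Quotient :=
    ⟨IsAperiodicRecognizable.finite_aperiodic_syntactic,
      fun ⟨_, h⟩ => isAperiodicRecognizable_of_syntactic h⟩
  exact ⟨hSF.trans hSynt, hSF.trans isAperiodicRecognizable_iff_preimage_image⟩
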